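/- arXiv:2310.13722 — 2 statements merged into one kernel-verified Lean document; each statement's English description precedes it below -/
import Mathlib

section
/- Let V be a complex vector space equipped with two inner products ⟨·,·⟩₁ and ⟨·,·⟩₂. Suppose the two inner products define the same π/2 angle, i.e., for all nonzero x, y ∈ V, Re⟨x,y⟩₁ = 0 if and only if Re⟨x,y⟩₂ = 0. Then there exists a constant c > 0 such that ⟨x,y⟩₂ = c·⟨x,y⟩₁ for all x, y ∈ V. -/
/-!
The real parts `Re ⟪·,·⟫₁` and `Re ⟪·,·⟫₂` are real bilinear forms on `V`, and they determine the
complex inner products since `Im ⟪x, y⟫ = Re ⟪I • x, y⟫`. So it suffices to show that a bilinear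
form `B₂` vanishing wherever a real inner product `B₁` does is a multiple of `B₁`. Splitting
`y = w + a • x` with `B₁ x w = 0` shows `B₂ x y = (B₂ x x / B₁ x x) * B₁ x y`, and the ratio
`B₂ x x / B₁ x x` is the same for `B₁`-orthogonal `x, w`, because `x + w` is `B₁`-orthogonal to
`B₁ w w • x - B₁ x x • w`. Splitting every vector along a fixed `x₀` then makes the ratio constant.
-/

open LinearMap (BilinForm)

namespace LinearMap.BilinForm

variable {E : Type*} [AddCommGroup E] [Module ℝ E] {B₁ B₂ : BilinForm ℝ E}

lemma exists_eq_add_smul_of_apply_eq_zero (B : BilinForm ℝ E) {x₀ : E} (hx₀ : B x₀ x₀ ≠ 0)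
    (x : E) : ∃ w : E, ∃ a : ℝ, B x₀ w = 0 ∧ x = w + a • x₀ :=
  ⟨x - (B x₀ x / B x₀ x₀) • x₀, B x₀ x / B x₀ x₀, by simp [hx₀], by simp⟩

lemma apply_eq_div_mul_of_ortho_imp (hortho : ∀ x y, B₁ x y = 0 → B₂ x y = 0) {x : E}
    (hx : B₁ x x ≠ 0) (y : E) : B₂ x y = B₂ x x / B₁ x x * B₁ x y := by
  obtain ⟨w, a, hxw, rfl⟩ := exists_eq_add_smul_of_apply_eq_zero B₁ hx y
  simp only [map_add, map_smul, smul_eq_mul, hxw, hortho x w hxw, zero_add]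
  field_simp

lemma apply_self_mul_eq_of_ortho_imp (hB₁ : B₁.IsSymm)
    (hortho : ∀ x y, B₁ x y = 0 → B₂ x y = 0) {x w : E} (hxw : B₁ x w = 0) :
    B₂ w w * B₁ x x = B₁ w w * B₂ x x := by
  have hwx : B₁ w x = 0 := hB₁.eq x w ▸ hxw
  have h := hortho (x + w) (B₁ w w • x - B₁ x x • w) (by
    simp only [map_add, map_sub, map_smul, smul_eq_mul, LinearMap.add_apply, hxw, hwx]
    ring)
  simp only [map_add, map_sub, map_smul, smul_eq_mul, LinearMap.add_apply, hortho x w hxw,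
    hortho w x hwx] at h
  linarith

theorem eq_smul_of_ortho_imp (hB₁ : B₁.IsSymm) (hanis : ∀ x, B₁ x x = 0 → x = 0)
    (hortho : ∀ x y, B₁ x y = 0 → B₂ x y = 0) {x₀ : E} (hx₀ : B₁ x₀ x₀ ≠ 0) :
    B₂ = (B₂ x₀ x₀ / B₁ x₀ x₀) • B₁ := by
  have hself : ∀ x, B₂ x x = B₂ x₀ x₀ / B₁ x₀ x₀ * B₁ x x := by
    intro x
    obtain ⟨w, a, hx₀w, rfl⟩ := exists_eq_add_smul_of_apply_eq_zero B₁ hx₀ x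
    have hw := apply_self_mul_eq_of_ortho_imp hB₁ hortho hx₀w
    have hwx₀ : B₁ w x₀ = 0 := hB₁.eq x₀ w ▸ hx₀w
    simp only [map_add, map_smul, smul_eq_mul, LinearMap.add_apply, LinearMap.smul_apply, hx₀w,
      hwx₀, hortho x₀ w hx₀w, hortho w x₀ hwx₀]
    field_simp
    linear_combination hw
  ext x y
  by_cases hx : x = 0
  · simp [hx]
  rw [apply_eq_div_mul_of_ortho_imp hortho (mt (hanis x) hx), hself, LinearMap.smul_apply,
    LinearMap.smul_apply, smul_eq_mul]
  field_simp [mt (hanis x) hx]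

end LinearMap.BilinForm

namespace PreInnerProductSpace.Core

variable {V : Type*} [AddCommGroup V] [Module ℂ V] (p : PreInnerProductSpace.Core ℂ V)

def reBilinForm : BilinForm ℝ V :=
  LinearMap.mk₂ ℝ (fun x y => (p.inner x y).re)
    (fun x y z => by simp [p.add_left])
    (fun r x y => by simp [← Complex.coe_smul, p.smul_left])
    (fun x y z => by simp [InnerProductSpace.Core.inner_add_right (c := p)])
    (fun r x y => by simp [← Complex.coe_smul, InnerProductSpace.Core.inner_smul_right (c := p)])

@[simp]
lemma reBilinForm_apply (x y : V) : p.reBilinForm x y = (p.inner x y).re := rfl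

lemma reBilinForm_isSymm : p.reBilinForm.IsSymm :=
  ⟨fun x y => by simp [← p.conj_inner_symm x y]⟩

lemma im_inner_eq_re_inner_I_smul_left (x y : V) :
    (p.inner x y).im = (p.inner (Complex.I • x) y).re := by
  simp [p.smul_left]

lemma inner_eq_ofReal_mul_of_reBilinForm_eq_smul {p₁ p₂ : PreInnerProductSpace.Core ℂ V} {c : ℝ}
    (h : p₂.reBilinForm = c • p₁.reBilinForm) (x y : V) : p₂.inner x y = c * p₁.inner x y := by
  have hre : ∀ x y, (p₂.inner x y).re = c * (p₁.inner x y).re := fun x y => by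
    simpa using congr($h x y)
  apply Complex.ext
  · simp [hre]
  · simp [im_inner_eq_re_inner_I_smul_left, hre]

end PreInnerProductSpace.Core

namespace InnerProductSpace.Core

variable {V : Type*} [AddCommGroup V] [Module ℂ V] (p : InnerProductSpace.Core ℂ V)

lemma eq_zero_of_re_inner_self_eq_zero {x : V} (hx : (p.inner x x).re = 0) : x = 0 :=
  (normSq_eq_zero (cd := p)).1 hx

lemma re_inner_self_pos {x : V} (hx : x ≠ 0) : 0 < (p.inner x x).re :=
  (p.re_inner_nonneg x).lt_of_ne' (mt p.eq_zero_of_re_inner_self_eq_zero hx)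

end InnerProductSpace.Core

/-- Two complex inner products defining the same `π/2` (Euclidean) angle are conformal. -/
theorem stmt_13 {V : Type*} [AddCommGroup V] [Module ℂ V]
    (p₁ p₂ : InnerProductSpace.Core ℂ V)
    (h : ∀ x y : V, x ≠ 0 → y ≠ 0 →
      ((p₁.inner x y).re = 0 ↔ (p₂.inner x y).re = 0)) :
    ∃ c : ℝ, 0 < c ∧ ∀ x y : V, p₂.inner x y = (c : ℂ) * p₁.inner x y := by
  rcases subsingleton_or_nontrivial V with _ | _
  · refine ⟨1, one_pos, fun x y => ?_⟩
    simp [Subsingleton.elim x 0, InnerProductSpace.Core.inner_zero_left (c := p₁.toCore),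
      InnerProductSpace.Core.inner_zero_left (c := p₂.toCore)]
  obtain ⟨x₀, hx₀⟩ := exists_ne (0 : V)
  have hortho : ∀ x y, p₁.reBilinForm x y = 0 → p₂.reBilinForm x y = 0 := by
    intro x y hxy
    rcases eq_or_ne x 0 with rfl | hx
    · exact LinearMap.map_zero₂ _ y
    rcases eq_or_ne y 0 with rfl | hy
    · exact map_zero _
    exact (h x y hx hy).1 hxy
  exact ⟨_, div_pos (p₂.re_inner_self_pos hx₀) (p₁.re_inner_self_pos hx₀),
    PreInnerProductSpace.Core.inner_eq_ofReal_mul_of_reBilinForm_eq_smul <|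
      LinearMap.BilinForm.eq_smul_of_ortho_imp p₁.reBilinForm_isSymm
        (fun _ => p₁.eq_zero_of_re_inner_self_eq_zero) hortho (p₁.re_inner_self_pos hx₀).ne'⟩
end

section
/- Let V be a real vector space equipped with two inner products ⟨·,·⟩₁ and ⟨·,·⟩₂, with induced norms ‖·‖₁ and ‖·‖₂. Then the following are equivalent: (1) there exists c > 0 such that ⟨x,y⟩₂ = c·⟨x,y⟩₁ for all x, y ∈ V; (2) there exists c > 0 such that ‖x‖₂ = c·‖x‖₁ for all x ∈ V; (3) for all nonzero x, y ∈ V, ⟨x,y⟩₁/(‖x‖₁‖y‖₁) = ⟨x,y⟩₂/(‖x‖₂‖y‖₂); (4) for all x, y ∈ V, ⟨x,y⟩₁ = 0 if and only if ⟨x,y⟩₂ = 0. -/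
/-!
For fixed `x`, orthogonality makes the functionals `p₁.inner x` and `p₂.inner x` share their
kernel, so `p₂.inner x = r x • p₁.inner x` with `r x = p₂.inner x x / p₁.inner x x`. Symmetry of
both inner products gives `r x = r y` whenever `p₁.inner x y ≠ 0`, and two `p₁`-orthogonal
nonzero vectors are both non-orthogonal to their sum, so `r` is constant on nonzero vectors.
The remaining implications are polarization and direct computation.
-/

namespace InnerProductSpace.Core

variable {V : Type*} [AddCommGroup V] [Module ℝ V]

section SingleCore

variable (p : InnerProductSpace.Core ℝ V)

theorem real_inner_comm (x y : V) : p.inner x y = p.inner y x := by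
  simpa using p.conj_inner_symm y x

theorem real_inner_zero_left (y : V) : p.inner 0 y = 0 := by
  let := p
  exact inner_zero_left y

theorem real_inner_add_right (x y z : V) : p.inner x (y + z) = p.inner x y + p.inner x z := by
  let := p
  exact inner_add_right x y z

theorem real_inner_sub_smul_self (x y : V) (t : ℝ) :
    p.inner x (y - t • x) = p.inner x y - t * p.inner x x := by
  let := p
  rw [inner_sub_right, inner_smul_right]

theorem real_inner_add_add_self (x y : V) :
    p.inner (x + y) (x + y) = p.inner x x + 2 * p.inner x y + p.inner y y := by
  let := p
  rw [inner_add_add_self, p.real_inner_comm y x]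
  ring

theorem real_inner_self_nonneg (x : V) : 0 ≤ p.inner x x := by
  simpa using p.re_inner_nonneg x

theorem real_inner_self_pos {x : V} (hx : x ≠ 0) : 0 < p.inner x x :=
  (p.real_inner_self_nonneg x).lt_of_ne' (mt (p.definite x) hx)

theorem real_inner_div_sqrt_eq_zero_iff {x y : V} (hx : x ≠ 0) (hy : y ≠ 0) :
    p.inner x y / (√(p.inner x x) * √(p.inner y y)) = 0 ↔ p.inner x y = 0 := by
  have hpos := mul_pos (Real.sqrt_pos.2 (p.real_inner_self_pos hx))
    (Real.sqrt_pos.2 (p.real_inner_self_pos hy))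
  rw [div_eq_zero_iff, or_iff_left hpos.ne']

end SingleCore

variable {p₁ p₂ : InnerProductSpace.Core ℝ V}

theorem real_inner_eq_mul_of_inner_self_eq_mul {c : ℝ}
    (h : ∀ x, p₂.inner x x = c * p₁.inner x x) (x y : V) :
    p₂.inner x y = c * p₁.inner x y := by
  have h₁ := p₁.real_inner_add_add_self x y
  have h₂ := p₂.real_inner_add_add_self x y
  rw [h, h, h] at h₂
  linear_combination (c * h₁ - h₂) / 2

theorem real_inner_div_sqrt_eq_of_eq_mul {c : ℝ} (hc : 0 < c)
    (h : ∀ x y, p₂.inner x y = c * p₁.inner x y) (x y : V) :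
    p₁.inner x y / (√(p₁.inner x x) * √(p₁.inner y y)) =
      p₂.inner x y / (√(p₂.inner x x) * √(p₂.inner y y)) := by
  rw [h, h, h, Real.sqrt_mul hc.le, Real.sqrt_mul hc.le, mul_mul_mul_comm,
    Real.mul_self_sqrt hc.le, mul_div_mul_left _ _ hc.ne']

variable (hortho : ∀ x y, p₁.inner x y = 0 → p₂.inner x y = 0)
include hortho

/-- The `p₁`-projection of `y` onto the `p₁`-orthogonal complement of `x` is also
`p₂`-orthogonal to `x`. -/
theorem real_inner_eq_inner_self_ratio_mul (x y : V) :
    p₂.inner x y = p₂.inner x x / p₁.inner x x * p₁.inner x y := by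
  rcases eq_or_ne x 0 with rfl | hx
  · simp only [real_inner_zero_left, mul_zero]
  have hx₁ := (p₁.real_inner_self_pos hx).ne'
  have hproj := hortho x (y - (p₁.inner x y / p₁.inner x x) • x) (by
    rw [real_inner_sub_smul_self, div_mul_cancel₀ _ hx₁, sub_self])
  rw [real_inner_sub_smul_self, sub_eq_zero] at hproj
  rw [hproj]
  ring

theorem inner_self_ratio_eq_of_real_inner_ne_zero {x y : V} (hxy : p₁.inner x y ≠ 0) :
    p₂.inner x x / p₁.inner x x = p₂.inner y y / p₁.inner y y := by
  refine mul_right_cancel₀ hxy ?_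
  rw [← real_inner_eq_inner_self_ratio_mul hortho, p₂.real_inner_comm,
    real_inner_eq_inner_self_ratio_mul hortho, p₁.real_inner_comm y x]

/-- Two vectors orthogonal for `p₁` are compared through their sum, which is not orthogonal to
either of them. -/
theorem inner_self_ratio_eq {x y : V} (hx : x ≠ 0) (hy : y ≠ 0) :
    p₂.inner x x / p₁.inner x x = p₂.inner y y / p₁.inner y y := by
  by_cases hxy : p₁.inner x y = 0
  · have hx' : p₁.inner x (x + y) ≠ 0 := by
      rw [real_inner_add_right, hxy, add_zero]
      exact (p₁.real_inner_self_pos hx).ne'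
    have hy' : p₁.inner y (x + y) ≠ 0 := by
      rw [real_inner_add_right, p₁.real_inner_comm y x, hxy, zero_add]
      exact (p₁.real_inner_self_pos hy).ne'
    rw [inner_self_ratio_eq_of_real_inner_ne_zero hortho hx',
      inner_self_ratio_eq_of_real_inner_ne_zero hortho hy']
  · exact inner_self_ratio_eq_of_real_inner_ne_zero hortho hxy

theorem exists_pos_real_inner_eq_mul_of_orthogonal :
    ∃ c : ℝ, 0 < c ∧ ∀ x y : V, p₂.inner x y = c * p₁.inner x y := by
  by_cases hV : ∃ x₀ : V, x₀ ≠ 0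
  · obtain ⟨x₀, hx₀⟩ := hV
    refine ⟨p₂.inner x₀ x₀ / p₁.inner x₀ x₀,
      div_pos (p₂.real_inner_self_pos hx₀) (p₁.real_inner_self_pos hx₀), fun x y => ?_⟩
    rcases eq_or_ne x 0 with rfl | hx
    · simp only [real_inner_zero_left, mul_zero]
    · rw [real_inner_eq_inner_self_ratio_mul hortho, inner_self_ratio_eq hortho hx hx₀]
  · push Not at hV
    exact ⟨1, one_pos, fun x y => by simp only [hV x, real_inner_zero_left, mul_zero]⟩

end InnerProductSpace.Core

open InnerProductSpace.Core in
/-- For two real inner products on a vector space `V`, the following are equivalent: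
(1) they are conformal; (2) the induced norms are proportional; (3) they define the same
angles for all pairs of nonzero vectors; (4) they define the same orthogonality
relations. -/
theorem stmt_17 {V : Type*} [AddCommGroup V] [Module ℝ V]
    (p₁ p₂ : InnerProductSpace.Core ℝ V) :
    [∃ c : ℝ, 0 < c ∧ ∀ x y : V, p₂.inner x y = c * p₁.inner x y,
     ∃ c : ℝ, 0 < c ∧ ∀ x : V,
       Real.sqrt (p₂.inner x x) = c * Real.sqrt (p₁.inner x x),
     ∀ x y : V, x ≠ 0 → y ≠ 0 →
       p₁.inner x y / (Real.sqrt (p₁.inner x x) * Real.sqrt (p₁.inner y y)) =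
       p₂.inner x y / (Real.sqrt (p₂.inner x x) * Real.sqrt (p₂.inner y y)),
     ∀ x y : V, p₁.inner x y = 0 ↔ p₂.inner x y = 0].TFAE := by
  tfae_have 1 → 2
  | ⟨c, hc, h⟩ => ⟨√c, Real.sqrt_pos.2 hc, fun x => by rw [h, Real.sqrt_mul hc.le]⟩
  tfae_have 2 → 1
  | ⟨c, hc, h⟩ => by
    refine ⟨c ^ 2, by positivity, real_inner_eq_mul_of_inner_self_eq_mul fun x => ?_⟩
    rw [← Real.sq_sqrt (p₂.real_inner_self_nonneg x), h, mul_pow,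
      Real.sq_sqrt (p₁.real_inner_self_nonneg x)]
  tfae_have 1 → 3
  | ⟨c, hc, h⟩ => fun x y _ _ => real_inner_div_sqrt_eq_of_eq_mul hc h x y
  tfae_have 3 → 4 := by
    intro h x y
    rcases eq_or_ne x 0 with rfl | hx
    · simp only [real_inner_zero_left]
    rcases eq_or_ne y 0 with rfl | hy
    · simp only [p₁.real_inner_comm x, p₂.real_inner_comm x, real_inner_zero_left]
    rw [← p₁.real_inner_div_sqrt_eq_zero_iff hx hy, h x y hx hy,
      p₂.real_inner_div_sqrt_eq_zero_iff hx hy]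
  tfae_have 4 → 1 := fun h => exists_pos_real_inner_eq_mul_of_orthogonal fun x y => (h x y).1
  tfae_finish
end
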